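/- Let A = ℝ[Y][u,v]/(uv − f) be the coordinate ring of the suspension of an affine variety Y along f ∈ ℝ[Y], and let δ₀ be a derivation of ℝ[Y] and q a polynomial with q(0) = 0. Define δ₁ on ℝ[Y][u,v] by δ₁(g) = q(v)·δ₀(g) for g ∈ ℝ[Y], δ₁(v) = 0, δ₁(u) = (q(v)/v)·δ₀(f) (which is a polynomial since q(0)=0). Then δ₁(uv − f) = 0, i.e., δ₁ preserves the ideal (uv − f) and hence descends to a derivation of A; moreover if δ₀ is locally nilpotent then so is the induced derivation on A. -/

import Mathlib

/-!
Since `q = X * qt`, the two terms of `δ₁ (u * v - f) = qt(v) δ₀(f) v - q(v) δ₀(f)` cancel, and a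
derivation preserves the principal ideal of any element it kills.

For local nilpotence: `δ₁` kills `v`, hence every polynomial in `v`, so the factor `q(v)` is a
`δ₁`-constant and `δ₁ⁿ r = q(v)ⁿ δ₀ⁿ r` on `R`, while `δ₁ⁿ⁺¹ u = qt(v) q(v)ⁿ δ₀ⁿ⁺¹ f`. Thus the
generators of `R[u, v]` are `δ₁`-nilpotent, and by the general Leibniz rule the elements on which
a derivation is locally nilpotent form a subalgebra.
-/

open MvPolynomial

namespace Derivation

variable {S A : Type*} [CommSemiring S] [CommSemiring A] [Algebra S A] (D : Derivation S A A)

open Finset in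
theorem iterate_apply_mul (n : ℕ) (a b : A) :
    (⇑D)^[n] (a * b) = ∑ ij ∈ antidiagonal n, n.choose ij.1 • ((⇑D)^[ij.1] a * (⇑D)^[ij.2] b) := by
  induction n with
  | zero => simp
  | succ n ih =>
    rw [sum_antidiagonal_choose_succ_nsmul (fun i j => (⇑D)^[i] a * (⇑D)^[j] b) n]
    simp only [Function.iterate_succ_apply', ih, map_sum, map_nsmul, leibniz, smul_eq_mul,
      smul_add, sum_add_distrib]
    refine congrArg (_ + ·) (sum_congr rfl fun ⟨i, j⟩ hij => ?_)
    rw [n.choose_symm_of_eq_add (mem_antidiagonal.1 hij).symm]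
    ring

theorem iterate_eq_zero_of_le {a : A} {m n : ℕ} (ha : (⇑D)^[m] a = 0) (hmn : m ≤ n) :
    (⇑D)^[n] a = 0 := by
  obtain ⟨k, rfl⟩ := Nat.exists_eq_add_of_le hmn
  rw [add_comm, Function.iterate_add_apply, ha, iterate_map_zero]

def locallyNilpotentSubalgebra : Subalgebra S A where
  carrier := {a | ∃ n, (⇑D)^[n] a = 0}
  mul_mem' := by
    rintro a b ⟨m, ha⟩ ⟨n, hb⟩
    refine ⟨m + n, ?_⟩
    rw [iterate_apply_mul]
    refine Finset.sum_eq_zero fun ⟨i, j⟩ hij => ?_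
    obtain hi | hj : m ≤ i ∨ n ≤ j := by
      have := Finset.HasAntidiagonal.mem_antidiagonal.1 hij
      omega
    · rw [D.iterate_eq_zero_of_le ha hi, zero_mul, smul_zero]
    · rw [D.iterate_eq_zero_of_le hb hj, mul_zero, smul_zero]
  add_mem' := by
    rintro a b ⟨m, ha⟩ ⟨n, hb⟩
    refine ⟨max m n, ?_⟩
    rw [iterate_map_add, D.iterate_eq_zero_of_le ha (le_max_left m n),
      D.iterate_eq_zero_of_le hb (le_max_right m n), add_zero]
  algebraMap_mem' r := ⟨1, D.map_algebraMap r⟩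

theorem iterate_mul_of_apply_eq_zero {w : A} (hw : D w = 0) (n : ℕ) (a : A) :
    (⇑D)^[n] (w * a) = w * (⇑D)^[n] a := by
  induction n with
  | zero => rfl
  | succ n ih => rw [Function.iterate_succ_apply', ih, leibniz, hw, smul_zero, add_zero,
      smul_eq_mul, Function.iterate_succ_apply']

theorem iterate_apply_eq_pow_mul {R : Type*} (δ : R → R) (φ : R → A) {c : A}
    (hc : D c = 0) (hφ : ∀ r, D (φ r) = c * φ (δ r)) (n : ℕ) (r : R) :
    (⇑D)^[n] (φ r) = c ^ n * φ (δ^[n] r) := by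
  induction n generalizing r with
  | zero => simp
  | succ n ih => rw [Function.iterate_succ_apply, hφ, D.iterate_mul_of_apply_eq_zero hc, ih,
      Function.iterate_succ_apply, pow_succ', mul_assoc]

theorem aeval_apply_eq_zero {x : A} (hx : D x = 0) (p : Polynomial S) :
    D (Polynomial.aeval x p) = 0 := by
  rw [map_aeval, hx, smul_zero]

theorem map_mem_span_singleton {g : A} (hg : D g = 0) {b : A} (hb : b ∈ Ideal.span {g}) :
    D b ∈ Ideal.span {g} := by
  obtain ⟨c, rfl⟩ := Ideal.mem_span_singleton'.1 hb
  rw [leibniz, hg, smul_zero, zero_add, smul_eq_mul, mul_comm]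
  exact Ideal.mul_mem_left _ _ (Ideal.mem_span_singleton_self g)

end Derivation

theorem stmt_13_general {R : Type} [CommRing R] [Algebra ℝ R] (f : R)
    (δ₀ : Derivation ℝ R R)
    (q qt : Polynomial ℝ)
    (hqt : q = Polynomial.X * qt)
    (δ₁ : Derivation ℝ (MvPolynomial (Fin 2) R) (MvPolynomial (Fin 2) R))
    (hδ₁C : ∀ r : R, δ₁ (C r) = (Polynomial.aeval (X 1 : MvPolynomial (Fin 2) R) q) * C (δ₀ r))
    (hδ₁v : δ₁ (X 1) = 0)
    (hδ₁u : δ₁ (X 0) = (Polynomial.aeval (X 1 : MvPolynomial (Fin 2) R) qt) * C (δ₀ f)) :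
    δ₁ (X 0 * X 1 - C f) = 0 ∧
    (∀ b ∈ Ideal.span {(X 0 * X 1 - C f : MvPolynomial (Fin 2) R)},
      δ₁ b ∈ Ideal.span {(X 0 * X 1 - C f : MvPolynomial (Fin 2) R)}) ∧
    ((∀ r : R, ∃ N : ℕ, (⇑δ₀)^[N] r = 0) →
      (∀ b : MvPolynomial (Fin 2) R, ∃ N : ℕ, (⇑δ₁)^[N] b = 0) ∧
      (∀ b : MvPolynomial (Fin 2) R, ∃ N : ℕ,
        (⇑δ₁)^[N] b ∈ Ideal.span {(X 0 * X 1 - C f : MvPolynomial (Fin 2) R)})) := by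
  have hv (p : Polynomial ℝ) : δ₁ (Polynomial.aeval (X 1) p) = 0 := δ₁.aeval_apply_eq_zero hδ₁v p
  have hrel : δ₁ (X 0 * X 1 - C f) = 0 := by
    rw [map_sub, Derivation.leibniz, hδ₁v, hδ₁u, hδ₁C, hqt, map_mul, Polynomial.aeval_X,
      smul_zero, zero_add, smul_eq_mul]
    ring
  refine ⟨hrel, fun b => δ₁.map_mem_span_singleton hrel, fun hδ₀ => ?_⟩
  have hC (n : ℕ) (r : R) : (⇑δ₁)^[n] (C r) = Polynomial.aeval (X 1) q ^ n * C ((⇑δ₀)^[n] r) :=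
    δ₁.iterate_apply_eq_pow_mul δ₀ C (hv q) hδ₁C n r
  have hδ₁ (b : MvPolynomial (Fin 2) R) : b ∈ δ₁.locallyNilpotentSubalgebra := by
    induction b using MvPolynomial.induction_on with
    | C r =>
      obtain ⟨N, hN⟩ := hδ₀ r
      exact ⟨N, by rw [hC, hN, C_0, mul_zero]⟩
    | add p p' hp hp' => exact add_mem hp hp'
    | mul_X p i hp =>
      refine mul_mem hp ?_
      match i with
      | 0 =>
        obtain ⟨N, hN⟩ := hδ₀ (δ₀ f)
        refine ⟨N + 1, ?_⟩
        rw [Function.iterate_succ_apply, hδ₁u, δ₁.iterate_mul_of_apply_eq_zero (hv qt), hC, hN,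
          C_0, mul_zero, mul_zero]
      | 1 => exact ⟨1, hδ₁v⟩
  refine ⟨hδ₁, fun b => ?_⟩
  obtain ⟨N, hN⟩ := hδ₁ b
  exact ⟨N, hN ▸ zero_mem _⟩

/-- Lifting a derivation δ₀ of R to the coordinate ring R[u,v]/(uv−f) of a
suspension via a polynomial q with q(0)=0. -/
theorem stmt_13 {R : Type} [CommRing R] [Algebra ℝ R] (f : R)
    (δ₀ : Derivation ℝ R R)
    (q qt : Polynomial ℝ) (hq0 : Polynomial.eval 0 q = 0)
    (hqt : q = Polynomial.X * qt)
    (δ₁ : Derivation ℝ (MvPolynomial (Fin 2) R) (MvPolynomial (Fin 2) R))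
    (hδ₁C : ∀ r : R, δ₁ (C r) = (Polynomial.aeval (X 1 : MvPolynomial (Fin 2) R) q) * C (δ₀ r))
    (hδ₁v : δ₁ (X 1) = 0)
    (hδ₁u : δ₁ (X 0) = (Polynomial.aeval (X 1 : MvPolynomial (Fin 2) R) qt) * C (δ₀ f)) :
    δ₁ (X 0 * X 1 - C f) = 0 ∧
    (∀ b ∈ Ideal.span {(X 0 * X 1 - C f : MvPolynomial (Fin 2) R)},
      δ₁ b ∈ Ideal.span {(X 0 * X 1 - C f : MvPolynomial (Fin 2) R)}) ∧
    ((∀ r : R, ∃ N : ℕ, (⇑δ₀)^[N] r = 0) →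
      (∀ b : MvPolynomial (Fin 2) R, ∃ N : ℕ, (⇑δ₁)^[N] b = 0) ∧
      (∀ b : MvPolynomial (Fin 2) R, ∃ N : ℕ,
        (⇑δ₁)^[N] b ∈ Ideal.span {(X 0 * X 1 - C f : MvPolynomial (Fin 2) R)})) :=
  stmt_13_general f δ₀ q qt hqt δ₁ hδ₁C hδ₁v hδ₁u
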